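/- arXiv:math/0509318 — 4 statements merged into one kernel-verified Lean document; each statement's English description precedes it below -/
import Mathlib

section
/- In the category of right R-modules, the inclusion A ↪ B of a submodule is a finitely presentable morphism (i.e., a finitely presentable object of (A ↓ Mod-R)) if and only if the quotient module B/A is finitely presentable. -/
universe v u

open CategoryTheory Limits Opposite

/-- A small category `J` is `κ`-filtered if every diagram in `J` of size `< κ`
admits a cocone. -/
def IsKappaFiltered (J : Type v) [SmallCategory J] (κ : Cardinal.{v}) : Prop :=
  ∀ (K : Type v) (_ : SmallCategory K), Cardinal.mk (Σ (a : K) (b : K), a ⟶ b) < κ →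
    ∀ F : K ⥤ J, Nonempty (Cocone F)

/-- An object `X` is `κ`-presentable if its hom-functor preserves `κ`-filtered colimits. -/
def KPresentable {C : Type u} [Category.{v} C] (κ : Cardinal.{v}) (X : C) : Prop :=
  ∀ (J : Type v) (_ : SmallCategory J), IsKappaFiltered J κ →
    Nonempty (PreservesColimitsOfShape J (coyoneda.obj (op X)))

/-- An object `X` is `κ`-generated if its hom-functor preserves `κ`-filtered colimits
of diagrams of monomorphisms. -/
def KGenerated {C : Type u} [Category.{v} C] (κ : Cardinal.{v}) (X : C) : Prop :=
  ∀ (J : Type v) (_ : SmallCategory J), IsKappaFiltered J κ →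
    ∀ F : J ⥤ C, (∀ {i j : J} (f : i ⟶ j), Mono (F.map f)) →
      Nonempty (PreservesColimit F (coyoneda.obj (op X)))

/-- `C` is locally `κ`-presentable. -/
def LocallyPresentable (C : Type u) [Category.{v} C] (κ : Cardinal.{v}) : Prop :=
  Cardinal.IsRegular κ ∧ HasColimits C ∧ ∃ S : Set C,
    Small.{v} S ∧ (∀ X ∈ S, KPresentable κ X) ∧
    ∀ A : C, ∃ (J : Type v) (_ : SmallCategory J) (_ : IsKappaFiltered J κ) (F : J ⥤ C)
      (c : Cocone F), Nonempty (IsColimit c) ∧ c.pt = A ∧ ∀ j, F.obj j ∈ S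

/-- `K` is injective with respect to the morphism `n`. -/
def InjWrt {C : Type u} [Category.{v} C] {X Y : C} (n : X ⟶ Y) (K : C) : Prop :=
  ∀ u : X ⟶ K, ∃ w : Y ⟶ K, n ≫ w = u

/-- `f : A ⟶ B` is a `κ`-pure morphism. -/
def KPure {C : Type u} [Category.{v} C] (κ : Cardinal.{v}) {A B : C} (f : A ⟶ B) : Prop :=
  ∀ ⦃P Q : C⦄ (z : P ⟶ Q) (u : P ⟶ A) (v : Q ⟶ B), KPresentable κ P → KPresentable κ Q →
    u ≫ f = z ≫ v → ∃ d : Q ⟶ A, z ≫ d = u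

/-!
Write `Q = M ⧸ N`. Maps `Under.mk N.subtype ⟶ Under.mk (0 : N ⟶ D)` are the maps `Q ⟶ D`, and
`D ↦ Under.mk 0` preserves filtered colimits, so if the inclusion is finitely presentable then so
is `Q` in `ModuleCat R`. Such a module is finitely generated and then finitely presented: `𝟙 Q`
factors through a stage of the filtered colimit of its finitely generated submodules, resp. of
the quotients of `R^n` by finitely many relations, and a retract of a finitely presented module
is finitely presented.

Conversely, lifting the generators of a presentation `R^m ⟶ R^n ⟶ Q ⟶ 0` to `M` exhibits the
inclusion `N ⟶ M` as a pushout of `R^m ⟶ R^n` along a map `R^m ⟶ N`, and in any category the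
pushout of a morphism between finitely presentable objects is finitely presentable as an object
of the under category.
-/

attribute [local instance] Cardinal.fact_isRegular_aleph0 IsFiltered.isConnected

theorem isKappaFiltered_iff_isCardinalFiltered {J : Type v} [SmallCategory J]
    (κ : Cardinal.{v}) [Fact κ.IsRegular] :
    IsKappaFiltered J κ ↔ IsCardinalFiltered J κ := by
  have harrow (K : Type v) [SmallCategory K] :
      HasCardinalLT (Arrow K) κ ↔ Cardinal.mk (Σ (a : K) (b : K), a ⟶ b) < κ := by
    rw [hasCardinalLT_iff_of_equiv (Arrow.equivSigma K), hasCardinalLT_iff_cardinal_mk_lt]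
  exact ⟨fun h => ⟨fun F hA => h _ _ ((harrow _).1 hA) F⟩,
    fun h K _ hK F => h.nonempty_cocone F ((harrow K).2 hK)⟩

theorem kPresentable_iff_isCardinalPresentable {C : Type u} [Category.{v} C]
    (κ : Cardinal.{v}) [Fact κ.IsRegular] (X : C) :
    KPresentable κ X ↔ IsCardinalPresentable X κ := by
  simp only [KPresentable, isKappaFiltered_iff_isCardinalFiltered, nonempty_prop]
  exact ⟨fun h => ⟨fun J _ hJ => h J _ hJ⟩, fun h J _ hJ => h.preservesColimitOfShape J⟩

section UnderCategory

variable {C : Type u} [Category.{v} C] {A B X Y : C} {f : A ⟶ B} {a : A ⟶ X} {b : B ⟶ Y}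
  {i : X ⟶ Y} {J : Type v} [SmallCategory J] [IsFiltered J] {F : J ⥤ Under X} {c : Cocone F}

theorem CategoryTheory.IsPushout.exists_hom_under_of_isColimit (h : IsPushout f a b i)
    [IsFinitelyPresentable.{v} A] [IsFinitelyPresentable.{v} B] (hc : IsColimit c)
    (g : Under.mk i ⟶ c.pt) : ∃ (j : J) (g' : Under.mk i ⟶ F.obj j), g' ≫ c.ι.app j = g := by
  have hc' : IsColimit ((Under.forget X).mapCocone c) := isColimitOfPreserves _ hc
  obtain ⟨j, q, hq⟩ : ∃ j, ∃ q : B ⟶ (F.obj j).right, q ≫ (c.ι.app j).right = b ≫ g.right :=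
    IsFinitelyPresentable.exists_hom_of_isColimit hc' (b ≫ g.right)
  obtain ⟨k, u, v, e⟩ : ∃ k, ∃ (u v : j ⟶ k),
      (a ≫ (F.obj j).hom) ≫ (F.map u).right = (f ≫ q) ≫ (F.map v).right := by
    refine IsFinitelyPresentable.exists_eq_of_isColimit hc' (a ≫ (F.obj j).hom) (f ≫ q) ?_
    show (a ≫ (F.obj j).hom) ≫ (c.ι.app j).right = (f ≫ q) ≫ (c.ι.app j).right
    have hj : (F.obj j).hom ≫ (c.ι.app j).right = c.pt.hom := Under.w (c.ι.app j)
    rw [Category.assoc, hj, ← Under.w g, Category.assoc, hq, reassoc_of% h.w]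
    rfl
  rw [Category.assoc, Under.w, Category.assoc] at e
  refine ⟨k, Under.homMk (h.desc (q ≫ (F.map v).right) (F.obj k).hom e.symm)
    (h.inr_desc _ _ _), Under.UnderMorphism.ext (h.hom_ext ?_ ?_)⟩
  · simp only [Under.comp_right, Under.homMk_right, h.inl_desc_assoc, Category.assoc]
    rw [← Under.comp_right, c.w, hq]
  · simpa using (Under.w g).symm

theorem CategoryTheory.IsPushout.exists_eq_under_of_isColimit (h : IsPushout f a b i)
    [IsFinitelyPresentable.{v} B] (hc : IsColimit c) {j₁ j₂ : J} (g₁ : Under.mk i ⟶ F.obj j₁)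
    (g₂ : Under.mk i ⟶ F.obj j₂) (hg : g₁ ≫ c.ι.app j₁ = g₂ ≫ c.ι.app j₂) :
    ∃ (k : J) (u : j₁ ⟶ k) (v : j₂ ⟶ k), g₁ ≫ F.map u = g₂ ≫ F.map v := by
  have hc' : IsColimit ((Under.forget X).mapCocone c) := isColimitOfPreserves _ hc
  obtain ⟨k, u, v, e⟩ : ∃ k, ∃ (u : j₁ ⟶ k) (v : j₂ ⟶ k),
      (b ≫ g₁.right) ≫ (F.map u).right = (b ≫ g₂.right) ≫ (F.map v).right :=
    IsFinitelyPresentable.exists_eq_of_isColimit hc' (b ≫ g₁.right) (b ≫ g₂.right) (by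
      show (b ≫ g₁.right) ≫ (c.ι.app j₁).right = (b ≫ g₂.right) ≫ (c.ι.app j₂).right
      simp only [Category.assoc, ← Under.comp_right, hg])
  refine ⟨k, u, v, Under.UnderMorphism.ext (h.hom_ext ?_ ?_)⟩
  · simpa using e
  · have w₁ : i ≫ g₁.right = (F.obj j₁).hom := Under.w g₁
    have w₂ : i ≫ g₂.right = (F.obj j₂).hom := Under.w g₂
    simp only [Under.comp_right, reassoc_of% w₁, reassoc_of% w₂, Under.w]

theorem isFinitelyPresentable_under_mk_of_isPushout (h : IsPushout f a b i)
    [IsFinitelyPresentable.{v} A] [IsFinitelyPresentable.{v} B] :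
    IsFinitelyPresentable.{v} (Under.mk i) := by
  rw [isFinitelyPresentable_iff_preservesFilteredColimits]
  refine ⟨fun J _ _ => ⟨fun {F} => ⟨fun {c} hc => ⟨Types.FilteredColimit.isColimitOf _ _
    (fun g => ?_) (fun j₁ j₂ g₁ g₂ hg => h.exists_eq_under_of_isColimit hc g₁ g₂ hg)⟩⟩⟩⟩
  obtain ⟨j, g', hg'⟩ := h.exists_hom_under_of_isColimit hc g
  exact ⟨j, g', hg'.symm⟩

theorem isFinitelyPresentable_of_isColimit_cokernelCofork [HasZeroMorphisms C]
    {s : CokernelCofork i} (hs : IsColimit s)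
    [IsFinitelyPresentable.{v} (Under.mk i)] : IsFinitelyPresentable.{v} s.pt := by
  rw [isFinitelyPresentable_iff_preservesFilteredColimits]
  refine ⟨fun J _ _ => ⟨fun {D} => ⟨fun {c} hc => ?_⟩⟩⟩
  have hc' := Under.isColimitLiftCocone D (0 : (Functor.const J).obj X ⟶ D) c 0
    (fun _ => zero_comp) hc
  let lift {W : C} (φ : s.pt ⟶ W) : Under.mk i ⟶ Under.mk (0 : X ⟶ W) :=
    Under.homMk (s.π ≫ φ) (by simp)
  refine ⟨Types.FilteredColimit.isColimitOf _ _ (fun (φ : s.pt ⟶ c.pt) => ?_)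
    (fun j₁ j₂ (φ₁ : s.pt ⟶ D.obj j₁) (φ₂ : s.pt ⟶ D.obj j₂)
      (hφ : φ₁ ≫ c.ι.app j₁ = φ₂ ≫ c.ι.app j₂) => ?_)⟩
  · obtain ⟨j, p, hp⟩ : ∃ j, ∃ p : Under.mk i ⟶ Under.mk (0 : X ⟶ D.obj j),
        p.right ≫ c.ι.app j = s.π ≫ φ := by
      obtain ⟨j, p, hp⟩ := IsFinitelyPresentable.exists_hom_of_isColimit hc' (lift φ)
      exact ⟨j, p, congr($(hp).right)⟩
    have hp0 : i ≫ p.right = 0 ≫ p.right := by simpa using Under.w p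
    refine ⟨j, Cofork.IsColimit.desc hs p.right hp0, (?_ : φ = _ ≫ c.ι.app j)⟩
    apply Cofork.IsColimit.hom_ext hs
    rw [Cofork.IsColimit.π_desc'_assoc, hp]
  · obtain ⟨k, u, v, e⟩ := IsFinitelyPresentable.exists_eq_of_isColimit hc' (lift φ₁) (lift φ₂)
      (Under.UnderMorphism.ext (by
        show (s.π ≫ φ₁) ≫ c.ι.app j₁ = (s.π ≫ φ₂) ≫ c.ι.app j₂
        rw [Category.assoc, Category.assoc, hφ]))
    refine ⟨k, u, v, (Cofork.IsColimit.hom_ext hs ?_ : φ₁ ≫ D.map u = φ₂ ≫ D.map v)⟩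
    simpa only [Category.assoc] using
      (congr($(e).right) : (s.π ≫ φ₁) ≫ D.map u = (s.π ≫ φ₂) ≫ D.map v)

end UnderCategory

theorem Module.finitePresentation_of_comp_eq_id {R : Type*} [Ring R] {M N : Type*}
    [AddCommGroup M] [Module R M] [AddCommGroup N] [Module R N] [Module.FinitePresentation R M]
    {f : M →ₗ[R] N} {g : N →ₗ[R] M} (h : f ∘ₗ g = .id) : Module.FinitePresentation R N :=
  Module.finitePresentation_of_surjective f (fun y => ⟨g y, congr($h y)⟩)
    (LinearMap.ker_eq_range_of_comp_eq_id h ▸ .of_finite)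

namespace ModuleCat

variable {R : Type u} [Ring R]

def coyonedaObjSelfIsoForget : coyoneda.obj (op (ModuleCat.of R R)) ≅ forget (ModuleCat.{u} R) :=
  NatIso.ofComponents (fun M => Equiv.toIso
    { toFun := fun f => f.hom 1
      invFun := fun m => ofHom (LinearMap.toSpanSingleton R M m)
      left_inv := fun f => hom_ext (LinearMap.ext_ring (by simp))
      right_inv := fun m => by simp })

instance isFinitelyPresentable_self : IsFinitelyPresentable.{u} (ModuleCat.of R R) := by
  have : (forget (ModuleCat.{u} R)).IsFinitelyAccessible :=
    Functor.isFinitelyAccessible_iff_preservesFilteredColimits.2 inferInstance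
  exact Functor.isCardinalAccessible_of_natIso coyonedaObjSelfIsoForget.symm _

instance isFinitelyPresentable_pi (ι : Type) [Finite ι] :
    IsFinitelyPresentable.{u} (ModuleCat.of R (ι → R)) := by
  have (k : Discrete ι) : IsFinitelyPresentable.{u}
      ((Discrete.functor fun _ : ι => ModuleCat.of R R).obj k) := isFinitelyPresentable_self
  have : IsFinitelyPresentable.{u} (⨁ fun _ : ι => ModuleCat.of R R) :=
    isCardinalPresentable_of_isColimit _ (biproduct.isColimit _) _ (by
      rw [hasCardinalLT_aleph0_iff]; infer_instance)
  exact isCardinalPresentable_of_iso (biproductIsoPi fun _ : ι => ModuleCat.of R R) _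

theorem isPushout_of_exact {A B X Y : ModuleCat.{v} R} {f : A ⟶ B} {a : A ⟶ X} {b : B ⟶ Y}
    {i : X ⟶ Y} (hexact : Function.Exact (f.hom.prod (-a.hom)) (b.hom.coprod i.hom))
    (hsurj : Function.Surjective (b.hom.coprod i.hom)) : IsPushout f a b i := by
  have hc := isColimitCokernelCofork (ofHom (f.hom.prod (-a.hom)))
    (ofHom (b.hom.coprod i.hom)) hexact hsurj
  have w : f ≫ b = a ≫ i := by
    ext x
    simpa [← sub_eq_add_neg, sub_eq_zero] using hexact.apply_apply_eq_zero x
  have hcond (s : PushoutCocone f a) : ofHom (f.hom.prod (-a.hom)) ≫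
      ofHom (s.inl.hom.coprod s.inr.hom) = 0 ≫ ofHom (s.inl.hom.coprod s.inr.hom) := by
    ext x
    simpa [← sub_eq_add_neg, sub_eq_zero] using congr($(s.condition).hom x)
  let desc (s : PushoutCocone f a) : Y ⟶ s.pt :=
    Cofork.IsColimit.desc hc (ofHom (s.inl.hom.coprod s.inr.hom)) (hcond s)
  have hdesc (s : PushoutCocone f a) (x : B) (y : X) :
      desc s (b x + i y) = s.inl x + s.inr y := by
    simpa using congr($(Cofork.IsColimit.π_desc' hc _ (hcond s)).hom (x, y))
  refine IsPushout.of_isColimit' ⟨w⟩ (PushoutCocone.IsColimit.mk _ desc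
    (fun s => ?_) (fun s => ?_) (fun s m hm₁ hm₂ => ?_))
  · ext x
    simpa using hdesc s x 0
  · ext y
    simpa using hdesc s 0 y
  · ext z
    obtain ⟨⟨x, y⟩, rfl⟩ := hsurj z
    simp [hdesc, ← hm₁, ← hm₂]

variable {Q : Type u} [AddCommGroup Q] [Module R Q]

variable (R Q) in
def spanFinsetDiagram : Finset Q ⥤ ModuleCat.{u} R where
  obj S := of R (Submodule.span R (S : Set Q))
  map h := ofHom (Submodule.inclusion (Submodule.span_mono (Finset.coe_subset.2 (leOfHom h))))

variable (R Q) in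
def spanFinsetCocone : Cocone (spanFinsetDiagram R Q) where
  pt := of R Q
  ι := { app S := ofHom (Submodule.span R (S : Set Q)).subtype }

noncomputable def isColimitSpanFinsetCocone : IsColimit (spanFinsetCocone R Q) := by
  classical
  refine isColimitOfReflects (forget _) (Types.FilteredColimit.isColimitOf _ _ (fun x => ?_)
    (fun S T x y hxy => ⟨S ∪ T, homOfLE Finset.subset_union_left,
      homOfLE Finset.subset_union_right, Subtype.ext hxy⟩))
  exact ⟨{x}, ⟨x, Submodule.subset_span (Finset.mem_coe.2 (Finset.mem_singleton_self x))⟩, rfl⟩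

theorem _root_.Module.Finite.of_isFinitelyPresentable
    (h : IsFinitelyPresentable.{u} (ModuleCat.of R Q)) : Module.Finite R Q := by
  obtain ⟨S, p, hp⟩ :=
    IsFinitelyPresentable.exists_hom_of_isColimit isColimitSpanFinsetCocone (𝟙 (of R Q))
  refine ⟨⟨S, eq_top_iff.2 fun x _ => ?_⟩⟩
  rw [← show (p ≫ _) x = x from congr($(hp) x)]
  exact (p x).2

variable {P : Type u} [AddCommGroup P] [Module R P] (π : P →ₗ[R] Q)

def quotientFinsetDiagram : Finset (LinearMap.ker π) ⥤ ModuleCat.{u} R where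
  obj T := of R (P ⧸ Submodule.span R (Subtype.val '' (T : Set (LinearMap.ker π))))
  map h := ofHom (Submodule.factor
    (Submodule.span_mono (Set.image_mono (Finset.coe_subset.2 (leOfHom h)))))

def quotientFinsetCocone : Cocone (quotientFinsetDiagram π) where
  pt := of R Q
  ι.app T := ofHom (Submodule.liftQ _ π
    (Submodule.span_le.2 (Set.image_subset_iff.2 fun x _ => x.2)))
  ι.naturality _ _ _ := by
    ext x
    obtain ⟨x, rfl⟩ := Submodule.Quotient.mk_surjective _ x
    rfl

noncomputable def isColimitQuotientFinsetCocone (hπ : Function.Surjective π) :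
    IsColimit (quotientFinsetCocone π) := by
  classical
  refine isColimitOfReflects (forget _) (Types.FilteredColimit.isColimitOf _ _ (fun x => ?_)
    (fun S T x y hxy => ?_))
  · obtain ⟨y, rfl⟩ := hπ x
    exact ⟨∅, Submodule.Quotient.mk y, rfl⟩
  · obtain ⟨x, rfl⟩ := Submodule.Quotient.mk_surjective _ x
    obtain ⟨y, rfl⟩ := Submodule.Quotient.mk_surjective _ y
    have hd : x - y ∈ LinearMap.ker π := by
      rw [LinearMap.mem_ker, map_sub, sub_eq_zero]
      exact hxy
    refine ⟨insert ⟨x - y, hd⟩ (S ∪ T),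
      homOfLE ((Finset.subset_union_left).trans (Finset.subset_insert _ _)),
      homOfLE ((Finset.subset_union_right).trans (Finset.subset_insert _ _)), ?_⟩
    exact (Submodule.Quotient.eq _).2 (Submodule.subset_span
      ⟨_, Finset.mem_coe.2 (Finset.mem_insert_self _ _), rfl⟩)

theorem _root_.Module.FinitePresentation.of_isFinitelyPresentable
    (h : IsFinitelyPresentable.{u} (ModuleCat.of R Q)) : Module.FinitePresentation R Q := by
  have := Module.Finite.of_isFinitelyPresentable h
  obtain ⟨n, π, hπ⟩ := Module.Finite.exists_fin' R Q
  obtain ⟨T, s, hs⟩ := IsFinitelyPresentable.exists_hom_of_isColimit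
    (isColimitQuotientFinsetCocone π hπ) (𝟙 (of R Q))
  have hT : Module.FinitePresentation R
      ((Fin n → R) ⧸ Submodule.span R (Subtype.val '' (T : Set (LinearMap.ker π)))) :=
    Module.finitePresentation_of_surjective _ (Submodule.mkQ_surjective _)
      (by rw [Submodule.ker_mkQ]; exact Submodule.fg_span (T.finite_toSet.image _))
  have : Module.FinitePresentation R ((quotientFinsetDiagram π).obj T) := hT
  exact Module.finitePresentation_of_comp_eq_id congr($(hs).hom)

end ModuleCat

theorem Submodule.exists_isPushout_subtype_of_finitePresentation {R : Type u} [Ring R]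
    {M : Type u} [AddCommGroup M] [Module R M] (N : Submodule R M)
    [Module.FinitePresentation R (M ⧸ N)] :
    ∃ (m n : ℕ) (f : ModuleCat.of R (Fin m → R) ⟶ ModuleCat.of R (Fin n → R))
      (a : ModuleCat.of R (Fin m → R) ⟶ ModuleCat.of R N)
      (b : ModuleCat.of R (Fin n → R) ⟶ ModuleCat.of R M),
      IsPushout f a b (ModuleCat.ofHom N.subtype) := by
  obtain ⟨n, π, hπ⟩ := Module.Finite.exists_fin' R (M ⧸ N)
  obtain ⟨lift, hlift⟩ := Module.projective_lifting_property N.mkQ π N.mkQ_surjective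
  obtain ⟨m, r, hr⟩ := (Submodule.fg_iff_exists_fin_linearMap R _).1
    (Module.FinitePresentation.fg_ker π hπ)
  have hker (v : Fin n → R) : lift v ∈ N ↔ v ∈ LinearMap.range r := by
    rw [hr, LinearMap.mem_ker, ← hlift, LinearMap.comp_apply, Submodule.mkQ_apply,
      Submodule.Quotient.mk_eq_zero]
  let a := LinearMap.codRestrict N (lift ∘ₗ r) fun α => (hker _).2 ⟨α, rfl⟩
  refine ⟨m, n, ModuleCat.ofHom r, ModuleCat.ofHom a, ModuleCat.ofHom lift,
    ModuleCat.isPushout_of_exact (fun ⟨v, x⟩ => ?_) (fun z => ?_)⟩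
  · simp only [ModuleCat.hom_ofHom, LinearMap.coprod_apply, Submodule.subtype_apply,
      Set.mem_range, LinearMap.prod_apply]
    constructor
    · intro h
      have hx : lift v = -x := eq_neg_of_add_eq_zero_left h
      obtain ⟨α, rfl⟩ := (hker v).1 (hx ▸ neg_mem x.2)
      exact ⟨α, Prod.ext rfl (Subtype.ext (by simp [a, hx]))⟩
    · rintro ⟨α, h⟩
      obtain ⟨rfl, rfl⟩ := Prod.ext_iff.1 h
      simp [a]
  · obtain ⟨v, hv⟩ := hπ (N.mkQ z)
    have hz : z - lift v ∈ N := by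
      rw [← Submodule.Quotient.eq, ← Submodule.mkQ_apply, ← hv, ← hlift]
      rfl
    exact ⟨(v, ⟨z - lift v, hz⟩), by simp⟩

/-- In the category of `R`-modules, the inclusion of a submodule `N ≤ M` is a finitely
presentable morphism (a finitely presentable object of `(N ↓ Mod-R)`) iff the quotient
`M ⧸ N` is a finitely presentable module. -/
theorem submodule_inclusion_finitelyPresentable_iff {R : Type u} [Ring R]
    {M : Type u} [AddCommGroup M] [Module R M] (N : Submodule R M) :
    KPresentable Cardinal.aleph0
      (Under.mk (ModuleCat.ofHom N.subtype :
        ModuleCat.of R N ⟶ ModuleCat.of R M)) ↔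
    Module.FinitePresentation R (M ⧸ N) := by
  rw [kPresentable_iff_isCardinalPresentable]
  constructor
  · intro
    exact Module.FinitePresentation.of_isFinitelyPresentable
      (isFinitelyPresentable_of_isColimit_cokernelCofork
        (ModuleCat.isColimitCokernelCofork (ModuleCat.ofHom N.subtype) (ModuleCat.ofHom N.mkQ)
          (LinearMap.exact_subtype_mkQ N) N.mkQ_surjective))
  · intro
    obtain ⟨_, _, _, _, _, h⟩ := N.exists_isPushout_subtype_of_finitePresentation
    exact isFinitelyPresentable_under_mk_of_isPushout h
end

section
/- Let C be a locally λ-presentable category and let X --e--> Z --g--> Y be morphisms with e a strong epimorphism. If the composite g∘e : X → Y is a λ-presentable morphism (λ-presentable object of (X ↓ C)), then g is a λ-presentable morphism (λ-presentable object of (Z ↓ C)). -/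
universe v u

open CategoryTheory Limits Opposite

/-! Since `e` is an epimorphism, `Under.map e : Under Z ⥤ Under X` is fully faithful and sends `g`
to `e ≫ g`, so `Hom(g, -)` is `Hom(e ≫ g, -) ∘ Under.map e`. As `κ` is infinite, `κ`-filtered
categories are filtered, hence connected, and `Under.map e` preserves connected colimits because
both forgetful functors create them. -/

lemma IsKappaFiltered.isFiltered {J : Type v} [SmallCategory J] {κ : Cardinal.{v}}
    (hJ : IsKappaFiltered J κ) (hκ : Cardinal.aleph0 ≤ κ) : IsFiltered J := by
  refine IsFiltered.of_cocone_nonempty.{v} J fun {K} _ _ F => hJ K _ ?_ F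
  have : Fintype K := FinCategory.fintypeObj
  have : ∀ a b : K, Fintype (a ⟶ b) := FinCategory.fintypeHom
  exact (Cardinal.lt_aleph0_of_finite _).trans_le hκ

namespace CategoryTheory

def Functor.FullyFaithful.compCoyonedaIso {C : Type u} [Category.{v} C] {D : Type*}
    [Category.{v} D] {F : C ⥤ D} (hF : F.FullyFaithful) (X : C) :
    F ⋙ coyoneda.obj (op (F.obj X)) ≅ coyoneda.obj (op X) :=
  NatIso.ofComponents (fun _ => hF.homEquiv.symm.toIso)
    fun _ => by ext; exact hF.map_injective (by simp)

namespace Under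

variable {C : Type u} [Category.{v} C]

instance preservesColimitsOfShape_map_of_isConnected {J : Type*} [Category J] [IsConnected J]
    {X Y : C} (f : X ⟶ Y) : PreservesColimitsOfShape J (map f) :=
  have := preservesColimitsOfShape_of_natIso (J := J) (mapForget f).symm
  preservesColimitsOfShape_of_reflects_of_preserves (map f) (forget X)

def fullyFaithfulMapOfEpi {X Y : C} (f : X ⟶ Y) [Epi f] : (map f).FullyFaithful where
  preimage k := homMk k.right ((cancel_epi f).1 ((Category.assoc _ _ _).symm.trans (Under.w k)))

end Under

end CategoryTheory

lemma KPresentable.of_fullyFaithful {C : Type u} [Category.{v} C] {D : Type*} [Category.{v} D]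
    {κ : Cardinal.{v}} {F : C ⥤ D} (hF : F.FullyFaithful)
    (hpres : ∀ (J : Type v) [SmallCategory J], IsKappaFiltered J κ → PreservesColimitsOfShape J F)
    {X : C} (hX : KPresentable κ (F.obj X)) : KPresentable κ X := by
  intro J _ hJ
  have := hpres J hJ
  obtain ⟨_⟩ := hX J _ hJ
  exact ⟨preservesColimitsOfShape_of_natIso (hF.compCoyonedaIso X)⟩

/-- In a locally `κ`-presentable category, if `e` is a strong epimorphism and `e ≫ g` is a
`κ`-presentable morphism, then `g` is a `κ`-presentable morphism. -/
theorem presentable_of_comp_strongEpi {C : Type u} [Category.{v} C] {κ : Cardinal.{v}}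
    (h : LocallyPresentable C κ) {X Z Y : C} (e : X ⟶ Z) (g : Z ⟶ Y) (he : StrongEpi e)
    (hge : KPresentable κ (Under.mk (e ≫ g))) :
    KPresentable κ (Under.mk g) :=
  KPresentable.of_fullyFaithful (F := Under.map e) (Under.fullyFaithfulMapOfEpi e)
    (fun _ _ hJ =>
      have := (hJ.isFiltered h.1.aleph0_le).isConnected
      inferInstance) hge
end

section
/- In a locally finitely presentable category, pure monomorphisms are stable under pushouts: if f : A → B is a pure monomorphism and g : A → C any morphism, then the pushout of f along g is a pure monomorphism. -/
/-!
Write `A` and `B` as filtered colimits of finitely presentable objects `Aᵢ`, `Bⱼ`. The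
morphisms `t : Aᵢ ⟶ Bⱼ` lying over `f` form a filtered category, and `W` is the filtered
colimit of the pushouts `Bⱼ ⊔_{Aᵢ} P` of `t` along `Aᵢ ⟶ A ⟶ P`. Purity of `f`, applied to
the square formed by `t` and `f`, gives `e : Bⱼ ⟶ A` with `t ≫ e = (Aᵢ ⟶ A)`, so
`P ⟶ Bⱼ ⊔_{Aᵢ} P` has the retraction induced by `e ≫ g` and `𝟙 P`. Finally, a filtered colimit
of split monomorphisms out of `P` is pure: a square from a finitely presentable arrow into
`P ⟶ W` factors through some stage, where the retraction solves it.
-/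

universe v u

open CategoryTheory Limits Opposite

lemma isFiltered_of_isKappaFiltered_aleph0 {J : Type v} [SmallCategory J]
    (hJ : IsKappaFiltered J Cardinal.aleph0) : IsFiltered J := by
  refine IsFiltered.of_cocone_nonempty.{v} _ fun {K} _ _ F => hJ K _ ?_ F
  exact Cardinal.mk_lt_aleph0_iff.mpr inferInstance

lemma isKappaFiltered_aleph0_of_isFiltered {J : Type v} [SmallCategory J] [IsFiltered J] :
    IsKappaFiltered J Cardinal.aleph0 := by
  intro K _ hK F
  have : Finite (Σ (a : K) (b : K), a ⟶ b) := Cardinal.mk_lt_aleph0_iff.mp hK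
  have : Finite K := Finite.of_injective (fun a => (⟨a, a, 𝟙 a⟩ : Σ (a : K) (b : K), a ⟶ b))
    fun _ _ h => congrArg Sigma.fst h
  have : ∀ a b : K, Finite (a ⟶ b) := fun a b =>
    Finite.of_injective (fun m => (⟨a, b, m⟩ : Σ (a : K) (b : K), a ⟶ b))
      fun _ _ h => by have := sigma_mk_injective h; exact sigma_mk_injective this
  let : FinCategory K :=
    { fintypeObj := Fintype.ofFinite K
      fintypeHom := fun _ _ => Fintype.ofFinite _ }
  exact IsFiltered.cocone_nonempty F

namespace KPresentable

variable {C : Type u} [Category.{v} C] {X : C} {J : Type v} [SmallCategory J] {F : J ⥤ C}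
  {c : Cocone F}

lemma exists_hom_comp_ι_eq (hX : KPresentable Cardinal.aleph0 X)
    (hJ : IsKappaFiltered J Cardinal.aleph0) (hc : IsColimit c) (v : X ⟶ c.pt) :
    ∃ (j : J) (w : X ⟶ F.obj j), w ≫ c.ι.app j = v := by
  obtain ⟨_⟩ := hX J _ hJ
  exact Types.jointly_surjective _ (isColimitOfPreserves (coyoneda.obj (op X)) hc) v

lemma exists_comp_map_eq_of_comp_ι_eq (hX : KPresentable Cardinal.aleph0 X)
    (hJ : IsKappaFiltered J Cardinal.aleph0) (hc : IsColimit c) {j₁ j₂ : J}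
    {p : X ⟶ F.obj j₁} {q : X ⟶ F.obj j₂} (hpq : p ≫ c.ι.app j₁ = q ≫ c.ι.app j₂) :
    ∃ (k : J) (a : j₁ ⟶ k) (b : j₂ ⟶ k), p ≫ F.map a = q ≫ F.map b := by
  have := isFiltered_of_isKappaFiltered_aleph0 hJ
  obtain ⟨_⟩ := hX J _ hJ
  exact (Types.FilteredColimit.isColimit_eq_iff _
    (isColimitOfPreserves (coyoneda.obj (op X)) hc)).mp hpq

end KPresentable

lemma kPure_of_isColimit_of_isSplitMono {C : Type u} [Category.{v} C] {D : Type v}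
    [SmallCategory D] (hD : IsKappaFiltered D Cardinal.aleph0) {F : D ⥤ C} {c : Cocone F}
    (hc : IsColimit c) {P : C} (α : (Functor.const D).obj P ⟶ F)
    [∀ d, IsSplitMono (α.app d)] {f : P ⟶ c.pt} (hf : ∀ d, α.app d ≫ c.ι.app d = f) :
    KPure Cardinal.aleph0 f := by
  intro X Y z u v hX hY huv
  obtain ⟨d, w, rfl⟩ := hY.exists_hom_comp_ι_eq hD hc v
  have hzw : (z ≫ w) ≫ c.ι.app d = (u ≫ α.app d) ≫ c.ι.app d := by
    simp only [Category.assoc, hf, huv]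
  obtain ⟨k, a, b, hab⟩ := hX.exists_comp_map_eq_of_comp_ι_eq hD hc hzw
  have hb : α.app d ≫ F.map b = α.app k := by simpa using (α.naturality b).symm
  refine ⟨w ≫ F.map a ≫ retraction (α.app k), ?_⟩
  rw [← Category.assoc, ← Category.assoc, hab]
  simp [reassoc_of% hb]

/-- The full subcategory of `Comma FA FB` on the maps lying over `f`. -/
structure StageMap {C : Type u} [Category.{v} C] {I J : Type v} [SmallCategory I]
    [SmallCategory J] {FA : I ⥤ C} {FB : J ⥤ C} (cA : Cocone FA) (cB : Cocone FB)
    (f : cA.pt ⟶ cB.pt) : Type v where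
  left : I
  right : J
  hom : FA.obj left ⟶ FB.obj right
  comm : hom ≫ cB.ι.app right = cA.ι.app left ≫ f

namespace StageMap

variable {C : Type u} [Category.{v} C] {I J : Type v} [SmallCategory I] [SmallCategory J]
  {FA : I ⥤ C} {FB : J ⥤ C} {cA : Cocone FA} {cB : Cocone FB} {f : cA.pt ⟶ cB.pt}

@[ext]
structure Hom (d d' : StageMap cA cB f) : Type v where
  left : d.left ⟶ d'.left
  right : d.right ⟶ d'.right
  w : FA.map left ≫ d'.hom = d.hom ≫ FB.map right

instance : SmallCategory (StageMap cA cB f) where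
  Hom := Hom
  id _ := ⟨𝟙 _, 𝟙 _, by simp⟩
  comp m n := ⟨m.left ≫ n.left, m.right ≫ n.right, by simp [n.w, reassoc_of% m.w]⟩

@[simp] lemma id_right (d : StageMap cA cB f) : Hom.right (𝟙 d) = 𝟙 d.right := rfl
@[simp] lemma comp_right {d₁ d₂ d₃ : StageMap cA cB f} (m : d₁ ⟶ d₂) (n : d₂ ⟶ d₃) :
    (m ≫ n).right = m.right ≫ n.right := rfl

@[ext]
lemma hom_ext {d d' : StageMap cA cB f} {m n : d ⟶ d'} (hl : m.left = n.left)
    (hr : m.right = n.right) : m = n :=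
  Hom.ext hl hr

lemma exists_left_eq (hcB : IsColimit cB) (hJ : IsKappaFiltered J Cardinal.aleph0)
    (hA : ∀ i, KPresentable Cardinal.aleph0 (FA.obj i)) (i : I) :
    ∃ d : StageMap cA cB f, d.left = i := by
  obtain ⟨j, t, ht⟩ := (hA i).exists_hom_comp_ι_eq hJ hcB (cA.ι.app i ≫ f)
  exact ⟨⟨i, j, t, ht⟩, rfl⟩

lemma exists_extension (hcB : IsColimit cB) (hJ : IsKappaFiltered J Cardinal.aleph0)
    (hA : ∀ i, KPresentable Cardinal.aleph0 (FA.obj i)) (d : StageMap cA cB f) {i : I}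
    (φ : d.left ⟶ i) :
    ∃ (j : J) (t : FA.obj i ⟶ FB.obj j) (_ : t ≫ cB.ι.app j = cA.ι.app i ≫ f)
      (ψ : d.right ⟶ j), FA.map φ ≫ t = d.hom ≫ FB.map ψ := by
  obtain ⟨j, t, ht⟩ := (hA i).exists_hom_comp_ι_eq hJ hcB (cA.ι.app i ≫ f)
  have : (FA.map φ ≫ t) ≫ cB.ι.app j = d.hom ≫ cB.ι.app d.right := by
    rw [Category.assoc, ht, d.comm, Cocone.w_assoc]
  obtain ⟨k, a, b, hab⟩ := (hA d.left).exists_comp_map_eq_of_comp_ι_eq hJ hcB this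
  refine ⟨k, t ≫ FB.map a, ?_, b, by rw [← hab, Category.assoc]⟩
  rw [Category.assoc, Cocone.w, ht]

lemma isFiltered [IsFiltered I] (hcB : IsColimit cB) (hJ : IsKappaFiltered J Cardinal.aleph0)
    (hA : ∀ i, KPresentable Cardinal.aleph0 (FA.obj i)) :
    IsFiltered (StageMap cA cB f) := by
  have := isFiltered_of_isKappaFiltered_aleph0 hJ
  have cocone_objs (d₁ d₂ : StageMap cA cB f) : ∃ (d : StageMap cA cB f) (_ : d₁ ⟶ d)
      (_ : d₂ ⟶ d), True := by
    obtain ⟨j₁, t₁, ht₁, ψ₁, w₁⟩ :=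
      exists_extension hcB hJ hA d₁ (IsFiltered.leftToMax d₁.left d₂.left)
    obtain ⟨j₂, t₂, ht₂, ψ₂, w₂⟩ :=
      exists_extension hcB hJ hA d₂ (IsFiltered.rightToMax d₁.left d₂.left)
    obtain ⟨k, a, b, hab⟩ :=
      (hA _).exists_comp_map_eq_of_comp_ι_eq hJ hcB (p := t₁) (q := t₂) (ht₁.trans ht₂.symm)
    refine ⟨⟨_, k, t₁ ≫ FB.map a, by rw [Category.assoc, Cocone.w, ht₁]⟩,
      ⟨IsFiltered.leftToMax _ _, ψ₁ ≫ a, ?_⟩, ⟨IsFiltered.rightToMax _ _, ψ₂ ≫ b, ?_⟩, trivial⟩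
    · simp [reassoc_of% w₁]
    · simp [hab, reassoc_of% w₂]
  have cocone_maps (d d' : StageMap cA cB f) (m m' : d ⟶ d') :
      ∃ (d'' : StageMap cA cB f) (n : d' ⟶ d''), m ≫ n = m' ≫ n := by
    obtain ⟨j, t, ht, ψ, w⟩ :=
      exists_extension hcB hJ hA d' (IsFiltered.coeqHom m.left m'.left)
    let ρ := IsFiltered.coeqHom (m.right ≫ ψ) (m'.right ≫ ψ)
    refine ⟨⟨_, _, t ≫ FB.map ρ, by rw [Category.assoc, Cocone.w, ht]⟩,
      ⟨IsFiltered.coeqHom m.left m'.left, ψ ≫ ρ, by simp [reassoc_of% w]⟩, ?_⟩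
    ext
    · exact IsFiltered.coeq_condition _ _
    · simpa using IsFiltered.coeq_condition (m.right ≫ ψ) (m'.right ≫ ψ)
  have : IsFilteredOrEmpty (StageMap cA cB f) := ⟨cocone_objs, cocone_maps⟩
  obtain ⟨d, -⟩ := exists_left_eq hcB hJ hA IsFiltered.nonempty.some
  exact { nonempty := ⟨d⟩ }

def rightFunctor : StageMap cA cB f ⥤ J where
  obj d := d.right
  map m := m.right

lemma final_rightFunctor [IsFiltered J] [IsFiltered (StageMap cA cB f)] :
    (rightFunctor : StageMap cA cB f ⥤ J).Final := by
  apply Functor.final_of_exists_of_isFiltered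
  · intro j
    obtain ⟨d⟩ := IsFiltered.nonempty (C := StageMap cA cB f)
    refine ⟨⟨d.left, IsFiltered.max j d.right, d.hom ≫ FB.map (IsFiltered.rightToMax _ _), ?_⟩,
      ⟨IsFiltered.leftToMax _ _⟩⟩
    rw [Category.assoc, Cocone.w, d.comm]
  · intro j d s s'
    let ρ : d.right ⟶ IsFiltered.coeq s s' := IsFiltered.coeqHom s s'
    refine ⟨⟨d.left, _, d.hom ≫ FB.map ρ, ?_⟩, ⟨𝟙 _, ρ, by simp⟩, IsFiltered.coeq_condition s s'⟩
    rw [Category.assoc, Cocone.w, d.comm]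

section Pushout

variable [HasPushouts C] {P : C} (f) (g : cA.pt ⟶ P)

attribute [local simp] pushout.inl_desc pushout.inr_desc pushout.inl_desc_assoc
  pushout.inr_desc_assoc

noncomputable abbrev pushoutFunctor : StageMap cA cB f ⥤ C where
  obj d := pushout d.hom (cA.ι.app d.left ≫ g)
  map {d d'} m := pushout.desc (FB.map m.right ≫ pushout.inl _ _) (pushout.inr _ _) (by
    rw [← Category.assoc, ← m.w, Category.assoc, pushout.condition, ← Category.assoc,
      ← Category.assoc, cA.w, Category.assoc])

noncomputable def pushoutInl : rightFunctor ⋙ FB ⟶ pushoutFunctor f g where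
  app _ := pushout.inl _ _
  naturality _ _ _ := (pushout.inl_desc _ _ _).symm

noncomputable def pushoutInr : (Functor.const _).obj P ⟶ pushoutFunctor f g where
  app _ := pushout.inr _ _
  naturality _ _ _ := by simp

noncomputable abbrev pushoutCocone {W : C} {g' : cB.pt ⟶ W} {f' : P ⟶ W}
    (sq : CommSq f g g' f') : Cocone (pushoutFunctor f g) where
  pt := W
  ι.app d := pushout.desc (cB.ι.app d.right ≫ g') f' (by
    rw [← Category.assoc, d.comm, Category.assoc, sq.w, Category.assoc])
  ι.naturality _ _ _ := by apply pushout.hom_ext <;> simp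

variable {f g}

lemma inr_comp_ι_eq [IsFiltered (StageMap cA cB f)] (s : Cocone (pushoutFunctor f g))
    (d d' : StageMap cA cB f) :
    pushout.inr _ _ ≫ s.ι.app d = pushout.inr _ _ ≫ s.ι.app d' :=
  have := IsFiltered.isConnected (StageMap cA cB f)
  nat_trans_from_is_connected (pushoutInr f g ≫ s.ι) d d'

lemma commSq_of_inl_comp_ι [IsFiltered (StageMap cA cB f)] (hcA : IsColimit cA)
    (hcB : IsColimit cB) (hJ : IsKappaFiltered J Cardinal.aleph0)
    (hA : ∀ i, KPresentable Cardinal.aleph0 (FA.obj i)) (s : Cocone (pushoutFunctor f g))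
    {β : cB.pt ⟶ s.pt} (hβ : ∀ d, cB.ι.app d.right ≫ β = pushout.inl _ _ ≫ s.ι.app d)
    (d₀ : StageMap cA cB f) : CommSq f g β (pushout.inr _ _ ≫ s.ι.app d₀) := by
  refine ⟨hcA.hom_ext fun i => ?_⟩
  obtain ⟨d, rfl⟩ := exists_left_eq (f := f) hcB hJ hA i
  calc cA.ι.app d.left ≫ f ≫ β = d.hom ≫ cB.ι.app d.right ≫ β := by
        rw [← Category.assoc, ← d.comm, Category.assoc]
    _ = (cA.ι.app d.left ≫ g) ≫ pushout.inr _ _ ≫ s.ι.app d := by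
        rw [hβ, pushout.condition_assoc]
    _ = cA.ι.app d.left ≫ g ≫ pushout.inr _ _ ≫ s.ι.app d₀ := by
        rw [inr_comp_ι_eq s d d₀, Category.assoc]

noncomputable def isColimitPushoutCocone [IsFiltered I] (hcA : IsColimit cA)
    (hcB : IsColimit cB) (hJ : IsKappaFiltered J Cardinal.aleph0)
    (hA : ∀ i, KPresentable Cardinal.aleph0 (FA.obj i)) {W : C} {g' : cB.pt ⟶ W} {f' : P ⟶ W}
    (sq : IsPushout f g g' f') : IsColimit (pushoutCocone f g sq.toCommSq) := by
  have : IsFiltered (StageMap cA cB f) := isFiltered hcB hJ hA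
  have := isFiltered_of_isKappaFiltered_aleph0 hJ
  have := final_rightFunctor (cA := cA) (cB := cB) (f := f)
  let hcB' : IsColimit (cB.whisker (rightFunctor : StageMap cA cB f ⥤ J)) :=
    (Functor.Final.isColimitWhiskerEquiv _ _).symm hcB
  let d₀ : StageMap cA cB f := IsFiltered.nonempty.some
  let β (s : Cocone (pushoutFunctor f g)) : cB.pt ⟶ s.pt :=
    hcB'.desc ⟨s.pt, pushoutInl f g ≫ s.ι⟩
  have ι_β (s : Cocone (pushoutFunctor f g)) (d : StageMap cA cB f) :
      cB.ι.app d.right ≫ β s = pushout.inl _ _ ≫ s.ι.app d :=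
    hcB'.fac _ d
  exact
    { desc s := sq.desc (β s) _ (commSq_of_inl_comp_ι hcA hcB hJ hA s (ι_β s) d₀).w
      fac s d := by
        apply pushout.hom_ext
        · simp [ι_β]
        · simp [inr_comp_ι_eq s d₀ d]
      uniq s m hm := by
        apply sq.hom_ext
        · rw [sq.inl_desc]
          refine hcB'.hom_ext fun d => ?_
          change cB.ι.app d.right ≫ g' ≫ m = cB.ι.app d.right ≫ β s
          simp [ι_β, ← hm d]
        · simp [← hm d₀] }

lemma isSplitMono_pushoutInr_app (hf : KPure Cardinal.aleph0 f)
    (hA : ∀ i, KPresentable Cardinal.aleph0 (FA.obj i))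
    (hB : ∀ j, KPresentable Cardinal.aleph0 (FB.obj j)) (d : StageMap cA cB f) :
    IsSplitMono ((pushoutInr f g).app d) := by
  obtain ⟨e, he⟩ := hf d.hom (cA.ι.app d.left) (cB.ι.app d.right) (hA _) (hB _) d.comm.symm
  exact ⟨⟨pushout.desc (e ≫ g) (𝟙 P) (by rw [← Category.assoc, he, Category.comp_id]),
    pushout.inr_desc _ _ _⟩⟩

end Pushout

end StageMap

/-- In a locally finitely presentable category, pure monomorphisms are stable under
pushouts. -/
theorem pure_stable_under_pushout {C : Type u} [Category.{v} C]
    (h : LocallyPresentable C Cardinal.aleph0)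
    {A B P W : C} (f : A ⟶ B) (g : A ⟶ P) (f' : P ⟶ W) (g' : B ⟶ W)
    (hf : KPure Cardinal.aleph0 f) (sq : IsPushout f g g' f') :
    KPure Cardinal.aleph0 f' := by
  obtain ⟨-, _, S, -, hS, hpres⟩ := h
  obtain ⟨I, _, hI, FA, cA, ⟨hcA⟩, rfl, hFA⟩ := hpres A
  obtain ⟨J, _, hJ, FB, cB, ⟨hcB⟩, rfl, hFB⟩ := hpres B
  have : IsFiltered I := isFiltered_of_isKappaFiltered_aleph0 hI
  have hA : ∀ i, KPresentable Cardinal.aleph0 (FA.obj i) := fun i => hS _ (hFA i)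
  have : IsFiltered (StageMap cA cB f) := StageMap.isFiltered hcB hJ hA
  have : ∀ d, IsSplitMono ((StageMap.pushoutInr f g).app d) :=
    StageMap.isSplitMono_pushoutInr_app hf hA fun j => hS _ (hFB j)
  exact kPure_of_isColimit_of_isSplitMono isKappaFiltered_aleph0_of_isFiltered
    (StageMap.isColimitPushoutCocone hcA hcB hJ hA sq) (StageMap.pushoutInr f g)
    fun _ => pushout.inr_desc _ _ _
end

section
/- Let C be a locally λ-presentable category, γ a regular cardinal, and suppose (1) C has enough γ-injectives (every object admits a monomorphism into an object injective with respect to all γ-presentable monomorphisms), and (2) every monomorphism of C is a transfinite composition of γ-presentable monomorphisms. Then C has enough injectives: every object admits a monomorphism into an object injective with respect to all monomorphisms. -/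
universe v u

open CategoryTheory Limits Opposite

/-- The canonical cocone at stage `j` over the restriction of a chain `F` to `Set.Iio j`. -/
@[simps]
def chainCocone {C : Type u} [Category.{v} C] {J : Type v} [Preorder J] (F : J ⥤ C) (j : J) :
    Cocone ((Subtype.mono_coe (· ∈ Set.Iio j)).functor ⋙ F) where
  pt := F.obj j
  ι :=
    { app := fun i => F.map (homOfLE i.2.le)
      naturality := fun i i' g => by
        dsimp
        rw [Category.comp_id]
        erw [← F.map_comp]
        exact congrArg F.map (Subsingleton.elim _ _) }

/-- `f` is a transfinite composition of morphisms in `N`: `f` is (up to isomorphism) the map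
from the bottom to the top of a smooth chain indexed by a well-ordered set, all of whose
successor steps lie in `N`. -/
def IsTransfiniteCompositionOf {C : Type u} [Category.{v} C] (N : MorphismProperty C)
    {A B : C} (f : A ⟶ B) : Prop :=
  ∃ (J : Type v) (_ : LinearOrder J) (_ : OrderBot J) (_ : OrderTop J)
    (_ : WellFoundedLT J) (_ : SuccOrder J) (F : J ⥤ C)
    (e₁ : A ≅ F.obj ⊥) (e₂ : F.obj ⊤ ≅ B),
    (∀ j : J, ¬ IsMax j → N (F.map (homOfLE (Order.le_succ j)))) ∧
    (∀ j : J, Order.IsSuccLimit j → Nonempty (IsColimit (chainCocone F j))) ∧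
    f = e₁.hom ≫ F.map (homOfLE bot_le) ≫ e₂.hom

/-! Maps into `M` out of the stages of a smooth chain `F` form an inverse system
`j ↦ (F.obj j ⟶ M)`. If `M` is injective with respect to every successor step, the restriction
maps at successors are surjective, and smoothness glues compatible families below a limit stage,
so every map out of the bottom extends to a section of the system, i.e. along the composite.
A `γ`-injective object containing `A` is therefore injective with respect to all monomorphisms. -/

section

variable {C : Type u} [Category.{v} C]

lemma CategoryTheory.Limits.IsColimit.exists_desc_of_sections {K : Type*} [Category K]
    {D : K ⥤ C} {c : Cocone D} (hc : IsColimit c) (M : C)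
    (x : (D.op ⋙ yoneda.obj M).sections) :
    ∃ y : c.pt ⟶ M, ∀ k, c.ι.app k ≫ y = x.val (Opposite.op k) := by
  obtain ⟨y, hy, -⟩ := (Types.isLimit_iff _).1 ⟨c.isColimitYonedaEquiv hc M⟩ x.1 x.2
  exact ⟨y, fun k => hy (Opposite.op k)⟩

lemma injWrt_map_bot_top_of_chain {J : Type v} [LinearOrder J] [OrderBot J] [OrderTop J]
    [SuccOrder J] [WellFoundedLT J] (F : J ⥤ C) (M : C)
    (hsucc : ∀ j : J, ¬ IsMax j → InjWrt (F.map (homOfLE (Order.le_succ j))) M)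
    (hlim : ∀ j : J, Order.IsSuccLimit j → Nonempty (IsColimit (chainCocone F j))) :
    InjWrt (F.map (homOfLE (bot_le : (⊥ : J) ≤ ⊤))) M := by
  let d : (F.op ⋙ yoneda.obj M).WellOrderInductionData := .ofExists hsucc fun j hj x => by
    obtain ⟨y, hy⟩ := (hlim j hj).some.exists_desc_of_sections M x
    exact ⟨y, fun i hi => hy ⟨i, hi⟩⟩
  intro u
  obtain ⟨s, hs⟩ := d.surjective u
  exact ⟨s.1 (op ⊤), (s.2 (homOfLE bot_le).op).trans hs⟩

lemma InjWrt.iso_hom_comp_comp {A X Y B M : C} {f : X ⟶ Y} (hf : InjWrt f M) (e₁ : A ≅ X)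
    (e₂ : Y ≅ B) : InjWrt (e₁.hom ≫ f ≫ e₂.hom) M := fun u => by
  obtain ⟨w, hw⟩ := hf (e₁.inv ≫ u)
  exact ⟨e₂.inv ≫ w, by simp [hw]⟩

lemma InjWrt.of_isTransfiniteCompositionOf {N : MorphismProperty C} {M : C}
    (hN : ∀ ⦃X Y : C⦄ (n : X ⟶ Y), N n → InjWrt n M) {A B : C} {f : A ⟶ B}
    (hf : IsTransfiniteCompositionOf N f) : InjWrt f M := by
  obtain ⟨J, _, _, _, _, _, F, e₁, e₂, hsucc, hlim, rfl⟩ := hf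
  exact (injWrt_map_bot_top_of_chain F M (fun j hj => hN _ (hsucc j hj)) hlim).iso_hom_comp_comp
    e₁ e₂

end

theorem enough_injectives_of_transfinite_general {C : Type u} [Category.{v} C]
    {γ : Cardinal.{v}}
    (h1 : ∀ A : C, ∃ (M : C) (m : A ⟶ M), Mono m ∧
      (∀ {X Y : C} (n : X ⟶ Y), Mono n → KPresentable γ (Under.mk n) → InjWrt n M))
    (h2 : ∀ {A B : C} (f : A ⟶ B), Mono f →
      IsTransfiniteCompositionOf
        (fun X Y n => Mono n ∧ KPresentable γ (Under.mk (Y := Y) n)) f) :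
    ∀ A : C, ∃ (M : C) (m : A ⟶ M), Mono m ∧
      (∀ {X Y : C} (n : X ⟶ Y), Mono n → InjWrt n M) := by
  intro A
  obtain ⟨M, m, hm, hinj⟩ := h1 A
  exact ⟨M, m, hm, fun n hn =>
    InjWrt.of_isTransfiniteCompositionOf (fun _ _ g hg => hinj g hg.1 hg.2) (h2 n hn)⟩

/-- If `C` is locally `λ`-presentable, has enough `γ`-injectives, and every monomorphism is
a transfinite composition of `γ`-presentable monomorphisms, then `C` has enough injectives. -/
theorem enough_injectives_of_transfinite {C : Type u} [Category.{v} C]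
    {lam γ : Cardinal.{v}} (h : LocallyPresentable C lam) (hγ : Cardinal.IsRegular γ)
    (h1 : ∀ A : C, ∃ (M : C) (m : A ⟶ M), Mono m ∧
      (∀ {X Y : C} (n : X ⟶ Y), Mono n → KPresentable γ (Under.mk n) → InjWrt n M))
    (h2 : ∀ {A B : C} (f : A ⟶ B), Mono f →
      IsTransfiniteCompositionOf
        (fun X Y n => Mono n ∧ KPresentable γ (Under.mk (Y := Y) n)) f) :
    ∀ A : C, ∃ (M : C) (m : A ⟶ M), Mono m ∧
      (∀ {X Y : C} (n : X ⟶ Y), Mono n → InjWrt n M) :=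
  enough_injectives_of_transfinite_general h1 h2
end
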